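/- If in a forest no two α-nodes are incomparable and there exists at least one α-node, then there exists an α-node x with no α-node strictly below it, and every α-node of the forest is an ancestor of x, a sibling of x, or equal to x. -/

import Mathlib

/-! Take an α-node `x` of maximal depth; depths are bounded by the height of the forest. No α-node
lies strictly below `x`, and since every α-node is comparable with `x`, the remaining relations
(ancestor, sibling, equality) are exactly the ones the conclusion allows. -/

/-- Unranked ordered trees over an alphabet `E`. -/
inductive PTree (E : Type) : Type
  | node : E → List (PTree E) → PTree E

/-- Forests over `E`. -/
abbrev PForest (E : Type) := List (PTree E)

def PTree.label {E : Type} : PTree E → E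
  | .node a _ => a

def PTree.children {E : Type} : PTree E → List (PTree E)
  | .node _ c => c

/-- The subtree of a forest at a position (a nonempty sequence of child indices),
if it exists. -/
def PForest.get? {E : Type} : List ℕ → PForest E → Option (PTree E)
  | [], _ => none
  | [i], f => f[i]?
  | i :: p, f => (f[i]?).bind fun t => PForest.get? p t.children

/-- `p` is (the position of) a node of the forest `f`. -/
def IsNode {E : Type} (f : PForest E) (p : List ℕ) : Prop :=
  (PForest.get? p f).isSome

/-- `y` is the sibling immediately next to `x`. -/
def NS {E : Type} (f : PForest E) (p q : List ℕ) : Prop :=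
  IsNode f p ∧ IsNode f q ∧ ∃ u i, p = u ++ [i] ∧ q = u ++ [i + 1]

/-- `x` is the parent of `y`. -/
def PC {E : Type} (f : PForest E) (p q : List ℕ) : Prop :=
  IsNode f p ∧ IsNode f q ∧ ∃ i, q = p ++ [i]

/-- `y` is a sibling of `x`, two or more next-sibling steps to the right. -/
def SFS {E : Type} (f : PForest E) (p q : List ℕ) : Prop :=
  IsNode f p ∧ IsNode f q ∧ ∃ u i j, p = u ++ [i] ∧ q = u ++ [j] ∧ i + 2 ≤ j

/-- `y` is a descendant of `x`, two or more parent-child steps below. -/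
def SAD {E : Type} (f : PForest E) (p q : List ℕ) : Prop :=
  IsNode f p ∧ IsNode f q ∧ ∃ r, q = p ++ r ∧ 2 ≤ r.length

/-- `x` and `y` are incomparable: none of the ten basic relations (other than
incomparability itself) holds. -/
def Incomp {E : Type} (f : PForest E) (p q : List ℕ) : Prop :=
  IsNode f p ∧ IsNode f q ∧
    ¬(p = q ∨ NS f p q ∨ NS f q p ∨ PC f p q ∨ PC f q p ∨
      SFS f p q ∨ SFS f q p ∨ SAD f p q ∨ SAD f q p)

/-- `w` and `z` are (distinct) siblings: children of the same parent (or two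
roots of the forest), at any horizontal distance. -/
def Sib {E : Type} (f : PForest E) (p q : List ℕ) : Prop :=
  IsNode f p ∧ IsNode f q ∧ p ≠ q ∧ ∃ u i j, p = u ++ [i] ∧ q = u ++ [j]

/-- `p` is a node of `f` whose label satisfies `α`. -/
def AlphaNode {E : Type} (f : PForest E) (α : E → Prop) (p : List ℕ) : Prop :=
  ∃ t, PForest.get? p f = some t ∧ α t.label

theorem exists_max_image_of_bdd {α : Type*} (g : α → ℕ) {P : α → Prop} {N : ℕ}
    (hN : ∀ a, P a → g a ≤ N) (hex : ∃ a, P a) : ∃ x, P x ∧ ∀ w, P w → g w ≤ g x := by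
  obtain ⟨a, ha⟩ := hex
  have hbdd : BddAbove (g '' {a | P a}) := ⟨N, Set.forall_mem_image.2 hN⟩
  obtain ⟨_, ⟨x, hx, rfl⟩, hmax⟩ :=
    hbdd.exists_isGreatest_of_nonempty (Set.Nonempty.image g ⟨a, ha⟩)
  exact ⟨x, hx, fun w hw => hmax ⟨w, hw, rfl⟩⟩

mutual
def PTree.height {E : Type} : PTree E → ℕ
  | .node _ c => PForest.height c + 1
def PForest.height {E : Type} : PForest E → ℕ
  | [] => 0
  | t :: f => max t.height (PForest.height f)
end

section

variable {E : Type}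

theorem PTree.height_eq (t : PTree E) : t.height = PForest.height t.children + 1 := by
  cases t; rfl

theorem PTree.height_le_of_mem {t : PTree E} {f : PForest E} (h : t ∈ f) :
    t.height ≤ PForest.height f := by
  induction f with
  | nil => simp at h
  | cons s f ih =>
    rcases List.mem_cons.mp h with rfl | h
    · exact le_max_left _ _
    · exact (ih h).trans (le_max_right _ _)

theorem PTree.height_le_of_getElem? {f : PForest E} {i : ℕ} {t : PTree E} (h : f[i]? = some t) :
    t.height ≤ PForest.height f :=
  PTree.height_le_of_mem (List.mem_of_getElem? h)

theorem IsNode.length_le_height :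
    ∀ {p : List ℕ} {f : PForest E}, IsNode f p → p.length ≤ PForest.height f
  | [], _, h => by simp [IsNode, PForest.get?] at h
  | [i], f, h => by
    obtain ⟨t, ht⟩ := Option.isSome_iff_exists.mp (show (f[i]?).isSome from h)
    have := PTree.height_le_of_getElem? ht
    rw [t.height_eq] at this
    simp only [List.length_singleton]
    omega
  | i :: j :: q, f, h => by
    cases ht : f[i]? with
    | none => simp [IsNode, PForest.get?, ht] at h
    | some t =>
      have hsub : IsNode t.children (j :: q) := by simpa [IsNode, PForest.get?, ht] using h
      have := PTree.height_le_of_getElem? ht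
      rw [t.height_eq] at this
      have := hsub.length_le_height
      simp only [List.length_cons] at this ⊢
      omega

theorem AlphaNode.isNode {f : PForest E} {α : E → Prop} {p : List ℕ} (h : AlphaNode f α p) :
    IsNode f p := by
  obtain ⟨t, ht, -⟩ := h
  simp [IsNode, ht]

theorem sib_of_ne {f : PForest E} {u : List ℕ} {i j : ℕ} (hi : IsNode f (u ++ [i]))
    (hj : IsNode f (u ++ [j])) (hij : i ≠ j) : Sib f (u ++ [i]) (u ++ [j]) :=
  ⟨hi, hj, by simpa using hij, u, i, j, rfl, rfl⟩

theorem strictPrefix_append {p r : List ℕ} (hr : r ≠ []) : p <+: p ++ r ∧ p ≠ p ++ r :=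
  ⟨List.prefix_append p r, by simpa using hr.symm⟩

theorem eq_or_strictPrefix_or_sib_of_not_incomp {f : PForest E} {p q : List ℕ}
    (hp : IsNode f p) (hq : IsNode f q) (h : ¬Incomp f p q) :
    p = q ∨ (p <+: q ∧ p ≠ q) ∨ (q <+: p ∧ q ≠ p) ∨ Sib f p q := by
  have hrel := not_not.mp fun hc => h ⟨hp, hq, hc⟩
  rcases hrel with rfl | ⟨_, _, u, i, rfl, rfl⟩ | ⟨_, _, u, i, rfl, rfl⟩ | ⟨_, _, i, rfl⟩ |
      ⟨_, _, i, rfl⟩ | ⟨_, _, u, i, j, rfl, rfl, hij⟩ | ⟨_, _, u, i, j, rfl, rfl, hij⟩ |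
      ⟨_, _, r, rfl, hr⟩ | ⟨_, _, r, rfl, hr⟩
  · exact .inl rfl
  · exact .inr <| .inr <| .inr <| sib_of_ne hp hq (by omega)
  · exact .inr <| .inr <| .inr <| sib_of_ne hp hq (by omega)
  · exact .inr <| .inl <| strictPrefix_append (List.cons_ne_nil i [])
  · exact .inr <| .inr <| .inl <| strictPrefix_append (List.cons_ne_nil i [])
  · exact .inr <| .inr <| .inr <| sib_of_ne hp hq (by omega)
  · exact .inr <| .inr <| .inr <| sib_of_ne hp hq (by omega)
  · exact .inr <| .inl <| strictPrefix_append (List.ne_nil_of_length_pos (by omega))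
  · exact .inr <| .inr <| .inl <| strictPrefix_append (List.ne_nil_of_length_pos (by omega))

end

/-- If no two α-nodes of a forest are incomparable and some α-node exists, then
there is an α-node `x` with no α-node strictly below it, such that every
α-node is a (proper) ancestor of `x`, a sibling of `x`, or equal to `x`. -/
theorem exists_lowest_alpha_node {E : Type} (f : PForest E) (α : E → Prop)
    (hpair : ∀ p q : List ℕ, AlphaNode f α p → AlphaNode f α q → ¬ Incomp f p q)
    (hex : ∃ p : List ℕ, AlphaNode f α p) :
    ∃ x : List ℕ, AlphaNode f α x ∧
      (∀ w : List ℕ, AlphaNode f α w → ¬ (x <+: w ∧ x ≠ w)) ∧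
      (∀ w : List ℕ, AlphaNode f α w → (w <+: x ∧ w ≠ x) ∨ Sib f w x ∨ w = x) := by
  obtain ⟨x, hx, hdeepest⟩ :=
    exists_max_image_of_bdd List.length (fun _ hp => (AlphaNode.isNode hp).length_le_height) hex
  have not_strictPrefix : ∀ w, AlphaNode f α w → ¬(x <+: w ∧ x ≠ w) :=
    fun w hw ⟨hxw, hne⟩ => hne (hxw.eq_of_length_le (hdeepest w hw))
  refine ⟨x, hx, not_strictPrefix, fun w hw => ?_⟩
  rcases eq_or_strictPrefix_or_sib_of_not_incomp hw.isNode hx.isNode (hpair w x hw hx) with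
    hwx | hwx | hxw | hwx
  · exact .inr (.inr hwx)
  · exact .inl hwx
  · exact absurd hxw (not_strictPrefix w hw)
  · exact .inr (.inl hwx)
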